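/- Proposition 3.1: Let P = {P_1,...,P_n} ⊂ R^d be a generic configuration. For distinct points P, Q of P, the Orchard relation P ∼ Q holds if and only if (-1)^{binom(n-3,d-1)} · ∏_S det(S - P) · det(S - Q) > 0, where the product runs over all d-element subsets S = {P_{i_1} < ... < P_{i_d}} of P \ {P, Q} and det(S - X) denotes the determinant of the d×d matrix with rows P_{i_1} - X, ..., P_{i_d} - X. -/

import Mathlib

open Finset
attribute [local instance] Classical.propDecidable

/-- A finite set of points in `ℝ^d` is a generic configuration if every subset of at most
`d+1` points is affinely independent. -/
def Generic {d : ℕ} (P : Finset (Fin d → ℝ)) : Prop :=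
  ∀ S : Finset (Fin d → ℝ), S ⊆ P → S.card ≤ d + 1 →
    AffineIndependent ℝ (fun x : S => (x : Fin d → ℝ))

/-- The affine hyperplane spanned by the points of `S` separates `A` from `B`:
both points lie off the hyperplane, and in different connected components of its
complement. -/
def Separates {d : ℕ} (S : Finset (Fin d → ℝ)) (A B : Fin d → ℝ) : Prop :=
  A ∉ (affineSpan ℝ (S : Set (Fin d → ℝ)) : Set (Fin d → ℝ)) ∧
  B ∉ (affineSpan ℝ (S : Set (Fin d → ℝ)) : Set (Fin d → ℝ)) ∧
  A ∉ connectedComponentIn ((affineSpan ℝ (S : Set (Fin d → ℝ)) : Set (Fin d → ℝ)))ᶜ B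

open Classical in
/-- `sepCount P A B` = the number `n(A,B)` of hyperplanes spanned by `d` points of
`P \ {A,B}` separating `A` from `B`. -/
noncomputable def sepCount {d : ℕ} (P : Finset (Fin d → ℝ)) (A B : Fin d → ℝ) : ℕ :=
  (((P \ {A, B}).powersetCard d).filter (fun S => Separates S A B)).card

/-- The Orchard relation: `A ∼ B` iff `A = B` or `n(A,B) ≡ binom (n-3) (d-1) (mod 2)`. -/
def OrchardRel {d : ℕ} (P : Finset (Fin d → ℝ)) (A B : Fin d → ℝ) : Prop :=
  A = B ∨ sepCount P A B % 2 = Nat.choose (P.card - 3) (d - 1) % 2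

/-- `detRows f X` is the determinant of the `d × d` matrix whose rows are `f 0 - X, ...,
f (d-1) - X`. -/
noncomputable def detRows {d : ℕ} (f : Fin d → (Fin d → ℝ)) (X : Fin d → ℝ) : ℝ :=
  Matrix.det (Matrix.of fun r c : Fin d => (f r - X) c)

/-- `detPair S A B = det(S - A) · det(S - B)` for a `d`-element subset `S`, the rows being
the points of `S` listed in a fixed order (the product of the two determinants does not
depend on the chosen order). -/
noncomputable def detPair {d : ℕ} (S : Finset (Fin d → ℝ)) (A B : Fin d → ℝ) : ℝ :=
  if h : S.card = d then
    detRows (fun r => (S.equivFin.symm (Fin.cast h.symm r) : Fin d → ℝ)) A *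
      detRows (fun r => (S.equivFin.symm (Fin.cast h.symm r) : Fin d → ℝ)) B
  else 0


/-!
For a `d`-subset `S` of the configuration, `X ↦ det(S - X)` is an affine function of `X` whose
zero set is exactly the hyperplane `H_S` (genericity makes the points of `S` affinely independent
and keeps `A`, `B` off `H_S`). Its two sign regions are convex open half-spaces, so `H_S`
separates `A` from `B` iff `det(S - A)` and `det(S - B)` have opposite signs. Hence the sign of
`∏_S det(S - A) · det(S - B)` is `(-1)^{n(A,B)}`, and the criterion is the parity condition
defining the Orchard relation.
-/

theorem AffineMap.mem_connectedComponentIn_iff_mul_pos {E : Type*} [AddCommGroup E]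
    [Module ℝ E] [TopologicalSpace E] [ContinuousAdd E] [ContinuousSMul ℝ E] (φ : E →ᵃ[ℝ] ℝ)
    (hφ : Continuous φ) {x y : E} (hy : φ y ≠ 0) :
    x ∈ connectedComponentIn {z | φ z ≠ 0} y ↔ 0 < φ x * φ y := by
  constructor
  · intro hxy
    have hsplit : {z | φ z ≠ 0} ⊆ φ ⁻¹' Set.Iio 0 ∪ φ ⁻¹' Set.Ioi 0 :=
      fun _ hz => ne_iff_lt_or_gt.1 hz
    have hdisj : Disjoint (φ ⁻¹' Set.Iio 0) (φ ⁻¹' Set.Ioi 0) :=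
      Set.disjoint_left.2 fun z (h₁ : φ z < 0) (h₂ : 0 < φ z) => lt_asymm h₁ h₂
    rcases isPreconnected_connectedComponentIn.subset_or_subset (isOpen_Iio.preimage hφ)
      (isOpen_Ioi.preimage hφ) hdisj ((connectedComponentIn_subset _ y).trans hsplit) with h | h
    · exact mul_pos_of_neg_of_neg (h hxy) (h (mem_connectedComponentIn hy))
    · exact mul_pos (h hxy) (h (mem_connectedComponentIn hy))
  · intro hxy
    rcases mul_pos_iff.1 hxy with ⟨hx, hy⟩ | ⟨hx, hy⟩
    · exact ((convex_Ioi 0).affine_preimage φ).isPreconnected.subset_connectedComponentIn hy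
        (fun _ hz => ne_of_gt hz) hx
    · exact ((convex_Iio 0).affine_preimage φ).isPreconnected.subset_connectedComponentIn hy
        (fun _ hz => ne_of_lt hz) hx

theorem Finset.notMem_affineSpan_of_affineIndependent_insert {k V P : Type*} [Ring k]
    [Nontrivial k] [AddCommGroup V] [Module k V] [AddTorsor V P] [DecidableEq P]
    {S : Finset P} {X : P}
    (h : AffineIndependent k (fun x : (insert X S : Finset P) => (x : P))) (hX : X ∉ S) :
    X ∉ affineSpan k (S : Set P) := by
  convert h.notMem_affineSpan_sdiff ⟨X, mem_insert_self X S⟩ Set.univ using 3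
  ext y
  constructor
  · intro hy
    exact ⟨⟨y, mem_insert_of_mem hy⟩, by simpa using ne_of_mem_of_not_mem hy hX, rfl⟩
  · rintro ⟨⟨y, hy⟩, hne, rfl⟩
    exact (mem_insert.1 hy).resolve_left (by simpa using hne)

theorem Finset.neg_one_pow_mul_prod_pos_iff {ι R : Type*} [CommRing R] [LinearOrder R]
    [IsStrictOrderedRing R] {s : Finset ι} {g : ι → R}
    {p : ι → Prop} [DecidablePred p] (hg : ∀ i ∈ s, g i ≠ 0 ∧ (g i < 0 ↔ p i)) (c : ℕ) :
    0 < (-1 : R) ^ c * ∏ i ∈ s, g i ↔ #(s.filter p) % 2 = c % 2 := by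
  have hsign : ∏ i ∈ s, g i = (-1) ^ #(s.filter p) * ∏ i ∈ s, |g i| :=
    calc ∏ i ∈ s, g i = ∏ i ∈ s, (if p i then -1 else 1) * |g i| := by
          refine prod_congr rfl fun i hi => ?_
          obtain ⟨hne, hneg⟩ := hg i hi
          split_ifs with h
          · rw [abs_of_neg (hneg.2 h), neg_one_mul, neg_neg]
          · rw [abs_of_pos (hne.lt_or_gt.resolve_left (mt hneg.1 h)), one_mul]
      _ = (-1) ^ #(s.filter p) * ∏ i ∈ s, |g i| := by
          rw [prod_mul_distrib, prod_ite, prod_const, prod_const_one, mul_one]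
  have habs : 0 < ∏ i ∈ s, |g i| := prod_pos fun i hi => abs_pos.2 (hg i hi).1
  rw [hsign, ← mul_assoc, ← pow_add, mul_pos_iff_of_pos_right habs]
  rcases Nat.even_or_odd (c + #(s.filter p)) with h | h
  · have := Nat.even_iff.1 h
    simp only [h.neg_one_pow, zero_lt_one, true_iff]
    omega
  · have := Nat.odd_iff.1 h
    norm_num [h.neg_one_pow]
    omega

/-- The rows `f r - X` and `f 0 - X` differ by vectors independent of `X`, so after row
operations `X` only enters one row, in which the determinant is linear. -/
theorem exists_affineMap_eq_detRows {d : ℕ} (f : Fin d → (Fin d → ℝ)) :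
    ∃ φ : (Fin d → ℝ) →ᵃ[ℝ] ℝ, ⇑φ = detRows f := by
  cases d with
  | zero => exact ⟨AffineMap.const ℝ _ 1, funext fun X => by simp [detRows]⟩
  | succ k =>
    let M : Matrix (Fin (k + 1)) (Fin (k + 1)) ℝ := Matrix.of fun r => f r - f 0
    let L :=
      (Matrix.detRowAlternating (R := ℝ) (n := Fin (k + 1))).toMultilinearMap.toLinearMap M 0
    refine ⟨AffineMap.const ℝ _ (L (f 0)) - L.toAffineMap, funext fun X => ?_⟩
    have hrows : detRows f X = (M.updateRow 0 (f 0 - X)).det := by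
      refine Matrix.det_eq_of_forall_row_eq_smul_add_const (fun i => if i = 0 then 0 else 1) 0
        (by simp) fun i j => ?_
      by_cases hi : i = 0
      · simp [Matrix.updateRow_apply, hi]
      · simp [M, Matrix.updateRow_apply, hi]
    change L (f 0) - L X = detRows f X
    rw [← map_sub, hrows]
    rfl

theorem detRows_eq_zero_iff_exists {d : ℕ} (f : Fin d → (Fin d → ℝ)) (X : Fin d → ℝ) :
    detRows f X = 0 ↔ ∃ v : Fin d → ℝ, v ≠ 0 ∧ ∑ r, v r • f r = (∑ r, v r) • X := by
  rw [detRows, ← Matrix.exists_vecMul_eq_zero_iff]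
  refine exists_congr fun v => and_congr_right fun _ => ?_
  have hvecMul : Matrix.vecMul v (Matrix.of fun r c => (f r - X) c) =
      ∑ r, v r • f r - (∑ r, v r) • X := by
    funext j
    simp [Matrix.vecMul, dotProduct, Finset.sum_mul, mul_sub]
  rw [hvecMul, sub_eq_zero]

theorem detRows_eq_zero_iff_mem_affineSpan {d : ℕ} {f : Fin d → (Fin d → ℝ)}
    (hf : AffineIndependent ℝ f) {X : Fin d → ℝ} :
    detRows f X = 0 ↔ X ∈ affineSpan ℝ (Set.range f) := by
  rw [detRows_eq_zero_iff_exists]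
  constructor
  · rintro ⟨v, hv, hvX⟩
    have hs : ∑ r, v r ≠ 0 := by
      intro hs
      rw [hs, zero_smul] at hvX
      exact hv (funext fun r => hf.eq_zero_of_sum_eq_zero hs hvX r (mem_univ r))
    have hw : ∑ r, (∑ r, v r)⁻¹ * v r = 1 := by rw [← Finset.mul_sum, inv_mul_cancel₀ hs]
    have hmem := affineCombination_mem_affineSpan hw f
    rw [Finset.affineCombination_eq_linear_combination _ _ _ hw] at hmem
    convert hmem
    simp_rw [mul_smul, ← Finset.smul_sum, hvX, smul_smul, inv_mul_cancel₀ hs, one_smul]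
  · intro hX
    obtain ⟨w, hw, rfl⟩ := eq_affineCombination_of_mem_affineSpan_of_fintype hX
    rw [Finset.affineCombination_eq_linear_combination _ _ _ hw]
    exact ⟨w, fun h => by simp [h] at hw, by rw [hw, one_smul]⟩

theorem separates_iff_detRows_mul_neg {d : ℕ} {S : Finset (Fin d → ℝ)}
    {f : Fin d → (Fin d → ℝ)} (hf : AffineIndependent ℝ f) (hrange : Set.range f = S)
    {A B : Fin d → ℝ} (hA : A ∉ affineSpan ℝ (S : Set (Fin d → ℝ)))
    (hB : B ∉ affineSpan ℝ (S : Set (Fin d → ℝ))) :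
    Separates S A B ↔ detRows f A * detRows f B < 0 := by
  obtain ⟨φ, hφ⟩ := exists_affineMap_eq_detRows f
  have hzero (X : Fin d → ℝ) : φ X = 0 ↔ X ∈ affineSpan ℝ (S : Set (Fin d → ℝ)) := by
    rw [hφ, detRows_eq_zero_iff_mem_affineSpan hf, hrange]
  have hcompl : (affineSpan ℝ (S : Set (Fin d → ℝ)) : Set (Fin d → ℝ))ᶜ = {z | φ z ≠ 0} :=
    Set.ext fun X => (hzero X).not.symm
  have hφA : φ A ≠ 0 := (hzero A).not.2 hA
  have hφB : φ B ≠ 0 := (hzero B).not.2 hB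
  have hcont : Continuous φ :=
    AffineMap.continuous_linear_iff.1 (LinearMap.continuous_of_finiteDimensional _)
  rw [Separates, hcompl, φ.mem_connectedComponentIn_iff_mul_pos hcont hφB, ← hφ, not_lt,
    (mul_ne_zero hφA hφB).le_iff_lt]
  exact ⟨fun h => h.2.2, fun h => ⟨hA, hB, h⟩⟩

theorem Generic.notMem_affineSpan {d : ℕ} {P S : Finset (Fin d → ℝ)} (hgen : Generic P)
    (hSP : S ⊆ P) (hcard : S.card ≤ d) {X : Fin d → ℝ} (hX : X ∈ P) (hXS : X ∉ S) :
    X ∉ affineSpan ℝ (S : Set (Fin d → ℝ)) :=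
  notMem_affineSpan_of_affineIndependent_insert
    (hgen (insert X S) (insert_subset hX hSP)
      ((card_insert_le X S).trans (Nat.succ_le_succ hcard))) hXS

theorem Generic.detPair_ne_zero_and_neg_iff_separates {d : ℕ} {P : Finset (Fin d → ℝ)}
    (hgen : Generic P) {A B : Fin d → ℝ} (hA : A ∈ P) (hB : B ∈ P) {S : Finset (Fin d → ℝ)}
    (hS : S ∈ (P \ {A, B}).powersetCard d) :
    detPair S A B ≠ 0 ∧ (detPair S A B < 0 ↔ Separates S A B) := by
  obtain ⟨hSsub, hcard⟩ := mem_powersetCard.1 hS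
  have hSP : S ⊆ P := hSsub.trans sdiff_subset
  have hA' := hgen.notMem_affineSpan hSP hcard.le hA fun h => by simpa using hSsub h
  have hB' := hgen.notMem_affineSpan hSP hcard.le hB fun h => by simpa using hSsub h
  let e : Fin d ≃ S := (finCongr hcard.symm).trans S.equivFin.symm
  have he : AffineIndependent ℝ (fun r => (e r : Fin d → ℝ)) :=
    (hgen S hSP (by omega)).comp_embedding e.toEmbedding
  have hrange : Set.range (fun r => (e r : Fin d → ℝ)) = S := by
    rw [Set.range_comp' Subtype.val e, e.range_eq_univ]
    simp
  have hdet {X} (hX : X ∉ affineSpan ℝ (S : Set (Fin d → ℝ))) :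
      detRows (fun r => (e r : Fin d → ℝ)) X ≠ 0 := by
    rwa [Ne, detRows_eq_zero_iff_mem_affineSpan he, hrange]
  rw [detPair, dif_pos hcard, separates_iff_detRows_mul_neg he hrange hA' hB']
  exact ⟨mul_ne_zero (hdet hA') (hdet hB'), Iff.rfl⟩

/-- Proposition 3.1: for distinct points `A, B` of a generic configuration
`P` of `n` points in `ℝ^d`, the Orchard relation `A ∼ B` holds iff
`(-1)^{binom (n-3) (d-1)} ∏_S det(S-A)·det(S-B) > 0`, the product running over all
`d`-element subsets `S` of `P \ {A,B}`. -/
theorem orchard_det_criterion {d : ℕ} (P : Finset (Fin d → ℝ)) (hgen : Generic P)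
    (A B : Fin d → ℝ) (hA : A ∈ P) (hB : B ∈ P) (hAB : A ≠ B) :
    (OrchardRel P A B ↔
      0 < (-1 : ℝ) ^ (Nat.choose (P.card - 3) (d - 1)) *
        ∏ S ∈ (P \ {A, B}).powersetCard d, detPair S A B) := by
  rw [neg_one_pow_mul_prod_pos_iff fun S hS =>
      hgen.detPair_ne_zero_and_neg_iff_separates hA hB hS,
    OrchardRel, or_iff_right hAB, sepCount]
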